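/- arXiv:2308.15193 — 3 statements merged into one kernel-verified Lean document; each statement's English description precedes it below -/
import Mathlib

section
/- Let k be a field and let V ⊆ Mat₂(k) be a k-subspace of the 2×2 matrices of dimension 3. Then V contains an invertible matrix. -/
theorem three_dim_subspace_of_matrices_contains_invertible
    (k : Type) [Field k] (V : Submodule k (Matrix (Fin 2) (Fin 2) k))
    (hV : Module.finrank k V = 3) :
    ∃ A ∈ V, IsUnit A := by
  classical
  have hrank : Module.finrank k (Matrix (Fin 2) (Fin 2) k) = 4 := by
    simp [Module.finrank_matrix]
  have hq : Module.finrank k (Matrix (Fin 2) (Fin 2) k ⧸ V) = 1 := by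
    have h := Submodule.finrank_quotient_add_finrank V
    omega
  have hkk : Module.finrank k (Matrix (Fin 2) (Fin 2) k ⧸ V) = Module.finrank k k := by
    simp [hq]
  obtain ⟨e⟩ := FiniteDimensional.nonempty_linearEquiv_of_finrank_eq hkk
  set φ : Matrix (Fin 2) (Fin 2) k →ₗ[k] k := e.toLinearMap ∘ₗ V.mkQ with hφdef
  have hker : ∀ M : Matrix (Fin 2) (Fin 2) k, φ M = 0 → M ∈ V := by
    intro M h
    have h2 : V.mkQ M = 0 := by
      have := (e.map_eq_zero_iff).mp h
      exact this
    rwa [← Submodule.Quotient.mk_eq_zero, ← Submodule.mkQ_apply]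
  set a := φ (Matrix.single 0 0 1) with haa
  set b := φ (Matrix.single 0 1 1) with hbb
  set c := φ (Matrix.single 1 0 1) with hcc
  set d := φ (Matrix.single 1 1 1) with hdd
  have hφ : ∀ w x y z : k, φ !![w, x; y, z] = w * a + x * b + y * c + z * d := by
    intro w x y z
    have hM : !![w, x; y, z] =
        w • Matrix.single 0 0 1 + x • Matrix.single 0 1 1 +
        y • Matrix.single 1 0 1 + z • Matrix.single 1 1 1 := by
      ext i j
      fin_cases i <;> fin_cases j <;> simp [Matrix.single]
    rw [hM, map_add, map_add, map_add, map_smul, map_smul, map_smul, map_smul,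
      smul_eq_mul, smul_eq_mul, smul_eq_mul, smul_eq_mul]
  have hunit : ∀ M : Matrix (Fin 2) (Fin 2) k, M.det ≠ 0 → IsUnit M := by
    intro M h
    exact (Matrix.isUnit_iff_isUnit_det M).mpr (isUnit_iff_ne_zero.mpr h)
  by_cases ha : a = 0 <;> by_cases hd : d = 0
  · -- a = 0, d = 0 : identity
    refine ⟨!![1, 0; 0, 1], hker _ ?_, hunit _ ?_⟩
    · rw [hφ]; rw [ha, hd]; ring
    · rw [Matrix.det_fin_two_of]; norm_num
  · -- a = 0, d ≠ 0
    by_cases hb : b = 0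
    · by_cases hc : c = 0
      · refine ⟨!![0, 1; -1, 0], hker _ ?_, hunit _ ?_⟩
        · rw [hφ, hb, hc]; ring
        · rw [Matrix.det_fin_two_of]; norm_num
      · refine ⟨!![1, 0; d, -c], hker _ ?_, hunit _ ?_⟩
        · rw [hφ, ha]; ring
        · rw [Matrix.det_fin_two_of]; simpa using hc
    · refine ⟨!![1, d; 0, -b], hker _ ?_, hunit _ ?_⟩
      · rw [hφ, ha]; ring
      · rw [Matrix.det_fin_two_of]; simpa using hb
  · -- a ≠ 0, d = 0
    by_cases hb : b = 0
    · by_cases hc : c = 0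
      · refine ⟨!![0, 1; -1, 0], hker _ ?_, hunit _ ?_⟩
        · rw [hφ, hb, hc]; ring
        · rw [Matrix.det_fin_two_of]; norm_num
      · refine ⟨!![-c, 0; a, 1], hker _ ?_, hunit _ ?_⟩
        · rw [hφ, hd]; ring
        · rw [Matrix.det_fin_two_of]; simpa using hc
    · refine ⟨!![-b, a; 0, 1], hker _ ?_, hunit _ ?_⟩
      · rw [hφ, hd]; ring
      · rw [Matrix.det_fin_two_of]; simpa using hb
  · -- a ≠ 0, d ≠ 0
    refine ⟨!![d, 0; 0, -a], hker _ ?_, hunit _ ?_⟩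
    · rw [hφ]; ring
    · rw [Matrix.det_fin_two_of]
      simp only [mul_zero, zero_mul, sub_zero, mul_neg]
      exact fun h => hd (by
        rcases mul_eq_zero.mp (neg_eq_zero.mp h) with h1 | h1
        · exact absurd h1 hd
        · exact absurd h1 ha)
end

section
/- Let ℓ be a prime, let R be an 𝔽_ℓ-algebra isomorphic to Mat₂(𝔽_ℓ), and let M be a free left R-module of rank one. Let G be a group acting on R by 𝔽_ℓ-algebra automorphisms and on M by additive automorphisms, compatibly in the sense that g(a·x) = g(a)·g(x) for all g ∈ G, a ∈ R, x ∈ M. Suppose S ⊆ R is a 2-dimensional commutative semisimple 𝔽_ℓ-subalgebra that is stable under the G-action, and suppose there exists a nonzero G-fixed element m ∈ M with S·m = R·m. Then every g ∈ G that fixes S pointwise acts trivially on R. -/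
/-!
Fix `g` acting trivially on `S`. For `r ∈ R` pick `s ∈ S` with `s·m = r·m`; since `g` fixes `m`
and `s`, it gives `g(r)·m = g(s)·m = s·m = r·m`. Then `(g(r)·y)·m = g(r)·g(y)·m = g(ry)·m = (ry)·m`,
so `g(r) - r` annihilates the nonzero module `R·m`. That annihilator is a proper two-sided ideal
of the simple ring `R ≅ Mat₂(𝔽_ℓ)`, hence zero.
-/

open Submodule in
theorem IsSimpleRing.eq_zero_of_forall_mul_smul_eq_zero {R M : Type*} [Ring R] [IsSimpleRing R]
    [AddCommGroup M] [Module R M] {m : M} (hm : m ≠ 0) {a : R}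
    (h : ∀ y : R, (a * y) • m = 0) : a = 0 := by
  have : Nontrivial (AddMonoid.End (R ∙ m)) := nontrivial_of_ne 1 0 fun h ↦ hm <| by
    simpa using DFunLike.congr_fun h ⟨m, mem_span_singleton_self m⟩
  refine (Module.toAddMonoidEnd R (R ∙ m)).injective ?_
  ext ⟨x, hx⟩
  obtain ⟨y, rfl⟩ := mem_span_singleton.mp hx
  change a • y • m = (0 : R) • y • m
  rw [← mul_smul, h, zero_smul]

theorem RingHom.eq_self_of_forall_smul_eq_smul {R M : Type*} [Ring R] [IsSimpleRing R]
    [AddCommGroup M] [Module R M] (σ : R →+* R) {m : M} (hm : m ≠ 0)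
    (h : ∀ r : R, σ r • m = r • m) (r : R) : σ r = r := by
  refine sub_eq_zero.mp <| IsSimpleRing.eq_zero_of_forall_mul_smul_eq_zero hm fun y ↦ ?_
  rw [sub_mul, sub_smul, mul_smul, ← h y, ← mul_smul, ← map_mul, h, sub_self]

theorem smul_eq_smul_of_compatible_of_fixed {R M : Type*} [Semiring R] [AddCommMonoid M]
    [Module R M] {S : Set R} {σ : R → R} {τ : M → M} (hτ : ∀ r x, τ (r • x) = σ r • τ x)
    {m : M} (hm : τ m = m) (hS : ∀ s ∈ S, σ s = s) (hSm : ∀ r : R, ∃ s ∈ S, s • m = r • m)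
    (r : R) : σ r • m = r • m := by
  obtain ⟨s, hs, hsr⟩ := hSm r
  calc σ r • m = τ (r • m) := by rw [hτ, hm]
    _ = τ (s • m) := by rw [hsr]
    _ = s • m := by rw [hτ, hS s hs, hm]
    _ = r • m := hsr

theorem torus_trick_general
    (ℓ : ℕ) (hℓ : ℓ.Prime)
    (R : Type) [Ring R] [Algebra (ZMod ℓ) R]
    (hR : Nonempty (R ≃ₐ[ZMod ℓ] Matrix (Fin 2) (Fin 2) (ZMod ℓ)))
    (M : Type) [AddCommGroup M] [Module R M]
    (G : Type) [Group G]
    -- `G` acts on `R` by `𝔽ℓ`-algebra automorphisms and on `M` by additive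
    -- automorphisms
    (φ : G →* (R ≃ₐ[ZMod ℓ] R)) (ψ : G →* Multiplicative (AddAut M))
    -- compatibility: `g(a·x) = g(a)·g(x)`
    (hcompat : ∀ (g : G) (r : R) (x : M), Multiplicative.toAdd (ψ g) (r • x) = (φ g r) • (Multiplicative.toAdd (ψ g) x))
    (S : Subalgebra (ZMod ℓ) R)
    -- `m` is a nonzero `G`-fixed element with `S·m = R·m`
    (m : M) (hm : m ≠ 0) (hmfix : ∀ g : G, Multiplicative.toAdd (ψ g) m = m)
    (hSm : {x : M | ∃ s ∈ S, s • m = x} = {x : M | ∃ r : R, r • m = x}) :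
    -- every `g ∈ G` fixing `S` pointwise acts trivially on `R`
    ∀ g : G, (∀ s ∈ S, φ g s = s) → ∀ r : R, φ g r = r := by
  have : Fact ℓ.Prime := ⟨hℓ⟩
  obtain ⟨e⟩ := hR
  have : IsSimpleRing R := .of_ringEquiv e.symm.toRingEquiv inferInstance
  have hSm' (r : R) : ∃ s ∈ S, s • m = r • m := by
    have : r • m ∈ {x : M | ∃ s ∈ S, s • m = x} := hSm ▸ ⟨r, rfl⟩
    exact this
  intro g hg
  exact (φ g : R →+* R).eq_self_of_forall_smul_eq_smul hm
    (smul_eq_smul_of_compatible_of_fixed (hcompat g) (hmfix g) hg hSm')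

theorem torus_trick
    (ℓ : ℕ) (hℓ : ℓ.Prime)
    (R : Type) [Ring R] [Algebra (ZMod ℓ) R]
    (hR : Nonempty (R ≃ₐ[ZMod ℓ] Matrix (Fin 2) (Fin 2) (ZMod ℓ)))
    (M : Type) [AddCommGroup M] [Module R M]
    -- `M` is a free left `R`-module of rank one
    (hfree : Nonempty (M ≃ₗ[R] R))
    (G : Type) [Group G]
    -- `G` acts on `R` by `𝔽ℓ`-algebra automorphisms and on `M` by additive
    -- automorphisms
    (φ : G →* (R ≃ₐ[ZMod ℓ] R)) (ψ : G →* Multiplicative (AddAut M))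
    -- compatibility: `g(a·x) = g(a)·g(x)`
    (hcompat : ∀ (g : G) (r : R) (x : M), Multiplicative.toAdd (ψ g) (r • x) = (φ g r) • (Multiplicative.toAdd (ψ g) x))
    -- `S` is a 2-dimensional commutative semisimple `𝔽ℓ`-subalgebra
    (S : Subalgebra (ZMod ℓ) R)
    (hScomm : ∀ x ∈ S, ∀ y ∈ S, x * y = y * x)
    (hSdim : Module.finrank (ZMod ℓ) S = 2)
    (hSss : ∀ s ∈ S, IsNilpotent s → s = 0)
    -- `S` is `G`-stable
    (hSstable : ∀ (g : G), ∀ s ∈ S, φ g s ∈ S)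
    -- `m` is a nonzero `G`-fixed element with `S·m = R·m`
    (m : M) (hm : m ≠ 0) (hmfix : ∀ g : G, Multiplicative.toAdd (ψ g) m = m)
    (hSm : {x : M | ∃ s ∈ S, s • m = x} = {x : M | ∃ r : R, r • m = x}) :
    -- every `g ∈ G` fixing `S` pointwise acts trivially on `R`
    ∀ g : G, (∀ s ∈ S, φ g s = s) → ∀ r : R, φ g r = r :=
  torus_trick_general ℓ hℓ R hR M G φ ψ hcompat S m hm hmfix hSm
end

section
/- Let ℓ be a prime and let R = { [[α, β], [0, α^ℓ]] : α, β ∈ 𝔽_{ℓ²} } ⊆ Mat₂(𝔽_{ℓ²}), a subring of the 2×2 matrices over 𝔽_{ℓ²}. Let J ⊆ R be the subset of strictly upper triangular matrices. Then J is a two-sided ideal of R with R/J ≅ 𝔽_{ℓ²}, J is the unique nonzero proper left ideal of R, and for any free left R-module M of rank one, the unique nonzero proper left R-submodule of M is M[J] = {x ∈ M : j·x = 0 for all j ∈ J}. -/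
noncomputable section

variable (ℓ : ℕ) [Fact ℓ.Prime]

/-- The subring `R = {[[α, β], [0, α^ℓ]] : α, β ∈ 𝔽_{ℓ²}}` of `Mat₂(𝔽_{ℓ²})`. -/
def frobSubring : Subring (Matrix (Fin 2) (Fin 2) (GaloisField ℓ 2)) where
  carrier := {A | A 1 0 = 0 ∧ A 1 1 = (A 0 0) ^ ℓ}
  zero_mem' := by
    constructor
    · rfl
    · show (0 : GaloisField ℓ 2) = 0 ^ ℓ
      rw [zero_pow (Fact.out : ℓ.Prime).ne_zero]
  one_mem' := by
    constructor
    · show (1 : Matrix (Fin 2) (Fin 2) (GaloisField ℓ 2)) 1 0 = 0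
      simp [Matrix.one_apply]
    · show (1 : Matrix (Fin 2) (Fin 2) (GaloisField ℓ 2)) 1 1 =
        ((1 : Matrix (Fin 2) (Fin 2) (GaloisField ℓ 2)) 0 0) ^ ℓ
      simp [Matrix.one_apply]
  add_mem' := by
    rintro x y ⟨hx1, hx2⟩ ⟨hy1, hy2⟩
    constructor
    · show x 1 0 + y 1 0 = 0
      rw [hx1, hy1, add_zero]
    · show x 1 1 + y 1 1 = (x 0 0 + y 0 0) ^ ℓ
      rw [hx2, hy2, add_pow_char]
  neg_mem' := by
    rintro x ⟨hx1, hx2⟩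
    constructor
    · show -(x 1 0) = 0
      rw [hx1, neg_zero]
    · show -(x 1 1) = (-(x 0 0)) ^ ℓ
      rw [hx2, ← frobenius_def, ← frobenius_def, map_neg]
  mul_mem' := by
    rintro x y ⟨hx1, hx2⟩ ⟨hy1, hy2⟩
    constructor
    · show ∑ i, x 1 i * y i 0 = 0
      rw [Fin.sum_univ_two, hx1, hy1, mul_zero, zero_mul, add_zero]
    · show ∑ i, x 1 i * y i 1 = (∑ i, x 0 i * y i 0) ^ ℓ
      rw [Fin.sum_univ_two, Fin.sum_univ_two, hx1, hy1, hx2, hy2, mul_zero, zero_mul,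
        zero_add, add_zero, mul_pow]

end


namespace FrobAux

variable (ℓ : ℕ) [Fact ℓ.Prime]

local notation "F" => GaloisField ℓ 2
local notation "R" => frobSubring ℓ

lemma coe10 (x : R) : (x : Matrix (Fin 2) (Fin 2) F) 1 0 = 0 := x.2.1

lemma coe11 (x : R) :
    (x : Matrix (Fin 2) (Fin 2) F) 1 1 = ((x : Matrix (Fin 2) (Fin 2) F) 0 0) ^ ℓ := x.2.2

/-- The element `[[α, β], [0, α^ℓ]]` of `R`. -/
noncomputable def mk (α β : F) : R :=
  ⟨!![α, β; 0, α ^ ℓ], by constructor <;> simp⟩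

@[simp] lemma mk00 (α β : F) : ((mk ℓ α β : R) : Matrix (Fin 2) (Fin 2) F) 0 0 = α := rfl
@[simp] lemma mk01 (α β : F) : ((mk ℓ α β : R) : Matrix (Fin 2) (Fin 2) F) 0 1 = β := rfl
@[simp] lemma mk10 (α β : F) : ((mk ℓ α β : R) : Matrix (Fin 2) (Fin 2) F) 1 0 = 0 := rfl
@[simp] lemma mk11 (α β : F) : ((mk ℓ α β : R) : Matrix (Fin 2) (Fin 2) F) 1 1 = α ^ ℓ := rfl

lemma ext' {x y : R}
    (h0 : (x : Matrix (Fin 2) (Fin 2) F) 0 0 = (y : Matrix (Fin 2) (Fin 2) F) 0 0)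
    (h1 : (x : Matrix (Fin 2) (Fin 2) F) 0 1 = (y : Matrix (Fin 2) (Fin 2) F) 0 1) :
    x = y := by
  apply Subtype.ext
  ext i j
  fin_cases i <;> fin_cases j
  · exact h0
  · exact h1
  · show (x : Matrix (Fin 2) (Fin 2) F) 1 0 = (y : Matrix (Fin 2) (Fin 2) F) 1 0
    rw [coe10, coe10]
  · show (x : Matrix (Fin 2) (Fin 2) F) 1 1 = (y : Matrix (Fin 2) (Fin 2) F) 1 1
    rw [coe11, coe11, h0]

lemma mul00 (x y : R) :
    ((x * y : R) : Matrix (Fin 2) (Fin 2) F) 0 0 =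
      (x : Matrix (Fin 2) (Fin 2) F) 0 0 * (y : Matrix (Fin 2) (Fin 2) F) 0 0 := by
  show ((x : Matrix (Fin 2) (Fin 2) F) * (y : Matrix (Fin 2) (Fin 2) F)) 0 0 = _
  rw [Matrix.mul_apply, Fin.sum_univ_two, coe10 ℓ y, mul_zero, add_zero]

lemma mul01 (x y : R) :
    ((x * y : R) : Matrix (Fin 2) (Fin 2) F) 0 1 =
      (x : Matrix (Fin 2) (Fin 2) F) 0 0 * (y : Matrix (Fin 2) (Fin 2) F) 0 1 +
      (x : Matrix (Fin 2) (Fin 2) F) 0 1 * (y : Matrix (Fin 2) (Fin 2) F) 1 1 := by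
  show ((x : Matrix (Fin 2) (Fin 2) F) * (y : Matrix (Fin 2) (Fin 2) F)) 0 1 = _
  rw [Matrix.mul_apply, Fin.sum_univ_two]

lemma Jdef (J : Set R)
    (hJ : J = {x : R |
      (x : Matrix (Fin 2) (Fin 2) F) 0 0 = 0 ∧
      (x : Matrix (Fin 2) (Fin 2) F) 1 0 = 0 ∧
      (x : Matrix (Fin 2) (Fin 2) F) 1 1 = 0}) :
    ∀ x : R, x ∈ J ↔ (x : Matrix (Fin 2) (Fin 2) F) 0 0 = 0 := by
  intro x
  rw [hJ]
  constructor
  · rintro ⟨h, -, -⟩; exact h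
  · intro h
    refine ⟨h, coe10 ℓ x, ?_⟩
    rw [coe11, h, zero_pow (Fact.out : ℓ.Prime).ne_zero]

/-- An element of `R` with nonzero `(0,0)` entry is a unit. -/
lemma isUnit_of_ne_zero (x : R)
    (h : (x : Matrix (Fin 2) (Fin 2) F) 0 0 ≠ 0) : IsUnit x := by
  set α := (x : Matrix (Fin 2) (Fin 2) F) 0 0 with hα
  set β := (x : Matrix (Fin 2) (Fin 2) F) 0 1 with hβ
  have hpow : α ^ ℓ ≠ 0 := pow_ne_zero _ h
  set y := mk ℓ α⁻¹ (-(β * (α * α ^ ℓ)⁻¹)) with hy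
  have one00 : ((1 : R) : Matrix (Fin 2) (Fin 2) F) 0 0 = 1 := by simp
  have one01 : ((1 : R) : Matrix (Fin 2) (Fin 2) F) 0 1 = 0 := by simp
  have hxy : x * y = 1 := by
    refine ext' ℓ ?_ ?_
    · rw [mul00, mk00, mul_inv_cancel₀ h, one00]
    · rw [mul01, mk01, mk11, one01, inv_pow]
      field_simp
      ring
  have hyx : y * x = 1 := by
    refine ext' ℓ ?_ ?_
    · rw [mul00, mk00, inv_mul_cancel₀ h, one00]
    · rw [mul01, mk00, mk01, coe11, one01, ← hβ, ← hα]
      field_simp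
      ring
  exact ⟨⟨x, y, hxy, hyx⟩, rfl⟩

lemma anni (r : R) (J : Set R)
    (hJ : J = {x : R |
      (x : Matrix (Fin 2) (Fin 2) F) 0 0 = 0 ∧
      (x : Matrix (Fin 2) (Fin 2) F) 1 0 = 0 ∧
      (x : Matrix (Fin 2) (Fin 2) F) 1 1 = 0}) :
    (∀ j ∈ J, j * r = 0) ↔ r ∈ J := by
  have hd := Jdef ℓ J hJ
  constructor
  · intro h
    have hj : (mk ℓ 0 1 : R) ∈ J := by rw [hd]; simp
    have := h _ hj
    have h01 : ((mk ℓ 0 1 * r : R) : Matrix (Fin 2) (Fin 2) F) 0 1 = 0 := by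
      rw [this]; rfl
    rw [mul01, mk00, mk01, zero_mul, zero_add, one_mul, coe11] at h01
    rw [hd]
    exact pow_eq_zero_iff (Fact.out : ℓ.Prime).ne_zero |>.mp h01
  · intro hr j hjJ
    rw [hd] at hr
    rw [hJ] at hjJ
    obtain ⟨j00, j10, j11⟩ := hjJ
    refine ext' ℓ ?_ ?_
    · rw [mul00, j00, zero_mul]; rfl
    · rw [mul01, j00, zero_mul, zero_add, coe11, hr,
        zero_pow (Fact.out : ℓ.Prime).ne_zero, mul_zero]; rfl

end FrobAux

set_option maxHeartbeats 1000000 in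
set_option synthInstance.maxHeartbeats 400000 in
theorem ramified_local_order_unique_ideal
    (ℓ : ℕ) [Fact ℓ.Prime]
    (J : Set (frobSubring ℓ))
    -- `J` is the set of strictly upper triangular matrices in `R`
    (hJ : J = {x : frobSubring ℓ |
      (x : Matrix (Fin 2) (Fin 2) (GaloisField ℓ 2)) 0 0 = 0 ∧
      (x : Matrix (Fin 2) (Fin 2) (GaloisField ℓ 2)) 1 0 = 0 ∧
      (x : Matrix (Fin 2) (Fin 2) (GaloisField ℓ 2)) 1 1 = 0}) :
    -- `J` is a two-sided ideal of `R`
    ((0 : frobSubring ℓ) ∈ J ∧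
      (∀ x ∈ J, ∀ y ∈ J, x + y ∈ J) ∧
      (∀ x ∈ J, -x ∈ J) ∧
      (∀ r : frobSubring ℓ, ∀ x ∈ J, r * x ∈ J ∧ x * r ∈ J)) ∧
    -- `R/J ≅ 𝔽_{ℓ²}`
    (∃ φ : frobSubring ℓ →+* GaloisField ℓ 2,
      Function.Surjective φ ∧ ∀ x : frobSubring ℓ, (φ x = 0 ↔ x ∈ J)) ∧
    -- `J` is the unique nonzero proper left ideal of `R`
    (∀ I : Ideal (frobSubring ℓ), I ≠ ⊥ → I ≠ ⊤ → (I : Set (frobSubring ℓ)) = J) ∧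
    -- for any free rank-one left `R`-module `M`, the unique nonzero proper
    -- `R`-submodule of `M` is `M[J] = {x ∈ M : j·x = 0 for all j ∈ J}`
    (∀ (M : Type) [AddCommGroup M] [Module (frobSubring ℓ) M],
      Nonempty (M ≃ₗ[frobSubring ℓ] frobSubring ℓ) →
      ∀ N : Submodule (frobSubring ℓ) M, N ≠ ⊥ → N ≠ ⊤ →
        (N : Set M) = {x : M | ∀ j ∈ J, j • x = 0}) := by
  have hd := FrobAux.Jdef ℓ J hJ
  have hp := (Fact.out : ℓ.Prime).ne_zero
  -- the ideal property
  have part1 : ((0 : frobSubring ℓ) ∈ J ∧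
      (∀ x ∈ J, ∀ y ∈ J, x + y ∈ J) ∧
      (∀ x ∈ J, -x ∈ J) ∧
      (∀ r : frobSubring ℓ, ∀ x ∈ J, r * x ∈ J ∧ x * r ∈ J)) := by
    refine ⟨by rw [hd]; rfl, ?_, ?_, ?_⟩
    · intro x hx y hy
      rw [hd] at hx hy ⊢
      show (x : Matrix (Fin 2) (Fin 2) (GaloisField ℓ 2)) 0 0 +
        (y : Matrix (Fin 2) (Fin 2) (GaloisField ℓ 2)) 0 0 = 0
      rw [hx, hy, add_zero]
    · intro x hx
      rw [hd] at hx ⊢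
      show -(x : Matrix (Fin 2) (Fin 2) (GaloisField ℓ 2)) 0 0 = 0
      rw [hx, neg_zero]
    · intro r x hx
      rw [hd] at hx ⊢
      rw [hd]
      constructor
      · rw [FrobAux.mul00, hx, mul_zero]
      · rw [FrobAux.mul00, hx, zero_mul]
  -- the quotient map
  have part2 : (∃ φ : frobSubring ℓ →+* GaloisField ℓ 2,
      Function.Surjective φ ∧ ∀ x : frobSubring ℓ, (φ x = 0 ↔ x ∈ J)) := by
    refine ⟨{ toFun := fun x => (x : Matrix (Fin 2) (Fin 2) (GaloisField ℓ 2)) 0 0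
              map_one' := by simp
              map_mul' := fun x y => FrobAux.mul00 ℓ x y
              map_zero' := rfl
              map_add' := fun x y => rfl }, ?_, ?_⟩
    · intro α
      exact ⟨FrobAux.mk ℓ α 0, rfl⟩
    · intro x
      rw [hd]
      exact Iff.rfl
  -- uniqueness of the ideal
  have part3 : ∀ I : Ideal (frobSubring ℓ), I ≠ ⊥ → I ≠ ⊤ →
      (I : Set (frobSubring ℓ)) = J := by
    intro I hbot htop
    have hIJ : ∀ x ∈ I, x ∈ J := by
      intro x hx
      rw [hd]
      by_contra h
      exact htop (I.eq_top_of_isUnit_mem hx (FrobAux.isUnit_of_ne_zero ℓ x h))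
    obtain ⟨z, hzI, hz⟩ := Submodule.exists_mem_ne_zero_of_ne_bot hbot
    have hzJ := hIJ z hzI
    have hz01 : (z : Matrix (Fin 2) (Fin 2) (GaloisField ℓ 2)) 0 1 ≠ 0 := by
      intro h01
      apply hz
      refine FrobAux.ext' ℓ ?_ ?_
      · rw [(hd z).mp hzJ]; rfl
      · rw [h01]; rfl
    ext w
    simp only [SetLike.mem_coe]
    constructor
    · exact hIJ w
    · intro hwJ
      set β := (w : Matrix (Fin 2) (Fin 2) (GaloisField ℓ 2)) 0 1 with hβ
      set γ := (z : Matrix (Fin 2) (Fin 2) (GaloisField ℓ 2)) 0 1 with hγ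
      have : w = FrobAux.mk ℓ (β * γ⁻¹) 0 * z := by
        refine FrobAux.ext' ℓ ?_ ?_
        · rw [FrobAux.mul00, FrobAux.mk00, (hd z).mp hzJ, mul_zero, (hd w).mp hwJ]
        · rw [FrobAux.mul01, FrobAux.mk00, FrobAux.mk01, zero_mul, add_zero, ← hγ,
            mul_assoc, inv_mul_cancel₀ hz01, mul_one]
      rw [this]
      exact I.mul_mem_left _ hzI
  refine ⟨part1, part2, part3, ?_⟩
  intro M _ _ ⟨e⟩ N hNbot hNtop
  set I : Ideal (frobSubring ℓ) := N.map (e : M →ₗ[frobSubring ℓ] frobSubring ℓ) with hI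
  have hinj : Function.Injective (e : M →ₗ[frobSubring ℓ] frobSubring ℓ) := e.injective
  have hIbot : I ≠ ⊥ := by
    intro h
    apply hNbot
    apply Submodule.map_injective_of_injective hinj
    rw [Submodule.map_bot]
    exact h
  have hItop : I ≠ ⊤ := by
    intro h
    apply hNtop
    apply Submodule.map_injective_of_injective hinj
    have h2 : Submodule.map (e : M →ₗ[frobSubring ℓ] frobSubring ℓ) ⊤ = ⊤ := by
      rw [Submodule.map_top, LinearMap.range_eq_top]
      exact e.surjective
    rw [h2]
    exact h
  have hIJ := part3 I hIbot hItop
  have hmem : ∀ x : M, x ∈ N ↔ e x ∈ J := by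
    intro x
    rw [← hIJ]
    simp only [SetLike.mem_coe, hI]
    constructor
    · intro hx
      exact Submodule.mem_map_of_mem hx
    · intro hx
      obtain ⟨y, hy, hyx⟩ := hx
      rwa [← hinj hyx]
  ext x
  simp only [SetLike.mem_coe, Set.mem_setOf_eq, hmem x]
  rw [← FrobAux.anni ℓ (e x) J hJ]
  constructor
  · intro h j hj
    apply e.injective
    rw [map_smul, map_zero]
    exact h j hj
  · intro h j hj
    have h2 : e (j • x) = 0 := by rw [h j hj, map_zero]
    rw [map_smul] at h2
    exact h2
end
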